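/- Let (X,d) be a compact metric space and F a finite nonempty commutative set of continuous self-maps of X. If F is super-transitive, then any two members of F are equal, i.e. F is a singleton. -/
import Mathlib


open Set Filter Metric TopologicalSpace

/-- The image of a set `A` under a relation given by a family `F` of self-maps:
`F(A) = ⋃_{f ∈ F} f(A)`. -/
def relImage {X : Type*} (F : Set (X → X)) (A : Set X) : Set X :=
  ⋃ f ∈ F, f '' A

/-- `F^n(x)`: the set of values at `x` of all `n`-fold compositions of members of `F`. -/
def relIter {X : Type*} (F : Set (X → X)) (n : ℕ) (x : X) : Set X :=
  (relImage F)^[n] {x}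

/-- `F` is super-transitive if for every pair of nonempty open sets `U, V` there exist
`x ∈ U` and `n ≥ 1` with `F^n(x) ⊆ V`. -/
def SuperTransitive {X : Type*} [TopologicalSpace X] (F : Set (X → X)) : Prop :=
  ∀ U V : Set X, IsOpen U → IsOpen V → U.Nonempty → V.Nonempty →
    ∃ x ∈ U, ∃ n : ℕ, 1 ≤ n ∧ relIter F n x ⊆ V

lemma relImage_mem {X : Type*} {F : Set (X → X)} {A : Set X} {h : X → X}
    (hh : h ∈ F) {z : X} (hz : z ∈ A) : h z ∈ relImage F A := by
  exact Set.mem_biUnion hh ⟨z, hz, rfl⟩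

lemma relIter_succ {X : Type*} (F : Set (X → X)) (n : ℕ) (x : X) :
    relIter F (n + 1) x = relImage F (relIter F n x) := by
  simp [relIter, Function.iterate_succ_apply']

lemma iterate_mem_relIter {X : Type*} {F : Set (X → X)} {h : X → X}
    (hh : h ∈ F) (x : X) : ∀ k : ℕ, h^[k] x ∈ relIter F k x := by
  intro k
  induction k with
  | zero => simp [relIter]
  | succ k ih =>
    rw [relIter_succ, Function.iterate_succ_apply']
    exact relImage_mem hh ih

/-- If a finite nonempty commutative family `F` of continuous self-maps of a compact metric
space is super-transitive, then any two members of `F` are equal, i.e. `F` is a singleton. -/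
theorem stmt_1 {X : Type*} [MetricSpace X] [CompactSpace X]
    (F : Set (X → X)) (hFfin : F.Finite) (hFne : F.Nonempty)
    (hFcont : ∀ f ∈ F, Continuous f)
    (hFcomm : ∀ f ∈ F, ∀ g ∈ F, f ∘ g = g ∘ f)
    (hST : SuperTransitive F) :
    ∀ f ∈ F, ∀ g ∈ F, f = g := by
  intro f hf g hg
  by_contra hne
  obtain ⟨y, hy⟩ := Function.ne_iff.mp hne
  set M : ℝ := dist (f y) (g y) with hM
  have hMpos : 0 < M := dist_pos.mpr hy
  -- uniform continuity of f
  have hfu : UniformContinuous f :=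
    CompactSpace.uniformContinuous_of_continuous (hFcont f hf)
  rw [Metric.uniformContinuous_iff] at hfu
  obtain ⟨δ, hδpos, hδ⟩ := hfu (M / 2) (by linarith)
  -- the open set V
  set V : Set X := ball y (δ / 2) ∩ {z | M / 2 < dist (f z) (g z)} with hV
  have hVopen : IsOpen V := by
    apply IsOpen.inter isOpen_ball
    exact isOpen_lt continuous_const (Continuous.dist (hFcont f hf) (hFcont g hg))
  have hVne : V.Nonempty := by
    refine ⟨y, ?_, ?_⟩
    · simp [Metric.mem_ball, hδpos]
    · simp only [Set.mem_setOf_eq]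
      linarith
  obtain ⟨x, hx, n, hn1, hnsub⟩ := hST V V hVopen hVopen hVne hVne
  -- a word of length n-1
  obtain ⟨h, hh⟩ := hFne
  obtain ⟨m, rfl⟩ : ∃ m, n = m + 1 := ⟨n - 1, by omega⟩
  set w : X := h^[m] x with hw
  have hwmem : w ∈ relIter F m x := iterate_mem_relIter hh x m
  have hp : f w ∈ V := by
    apply hnsub
    rw [relIter_succ]
    exact relImage_mem hf hwmem
  have hq : g w ∈ V := by
    apply hnsub
    rw [relIter_succ]
    exact relImage_mem hg hwmem
  -- distance between p and q is small
  have hdistpq : dist (f w) (g w) < δ := by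
    have h1 : dist (f w) y < δ / 2 := mem_ball.mp hp.1
    have h2 : dist (g w) y < δ / 2 := mem_ball.mp hq.1
    calc dist (f w) (g w) ≤ dist (f w) y + dist y (g w) := dist_triangle _ _ _
      _ < δ / 2 + δ / 2 := by rw [dist_comm y (g w)]; linarith
      _ = δ := by ring
  have hsmall : dist (f (f w)) (f (g w)) < M / 2 := hδ hdistpq
  have hcomm : f (g w) = g (f w) := congrFun (hFcomm f hf g hg) w
  have hbig : M / 2 < dist (f (f w)) (g (f w)) := hp.2
  rw [hcomm] at hsmall
  linarith
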